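/- Let $l = l_1 l_2$ with $l_1, l_2$ odd, positive, and coprime. Then the Salié sum factors as $S(a, b, l) = S(a \bar{l}_1, b \bar{l}_1, l_2) \cdot S(a \bar{l}_2, b \bar{l}_2, l_1)$, where $\bar{l}_1 l_1 \equiv 1 \pmod{l_2}$ and $\bar{l}_2 l_2 \equiv 1 \pmod{l_1}$. -/

import Mathlib

open Complex Real

/-- The Salié sum `S(a,b,l) = ∑_{h mod l, (h,l)=1} (h/l) e^{2πi(ah + b h̄)/l}`,
where `(·/l)` is the Jacobi symbol and `h̄` is the inverse of `h` mod `l`. -/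
noncomputable def salie (a b : ℤ) (l : ℕ) : ℂ :=
  ∑ h ∈ (Finset.range l).filter (fun h => Nat.Coprime h l),
    (jacobiSym (h : ℤ) l : ℂ) *
      Complex.exp (2 * Real.pi * Complex.I *
        ((a : ℂ) * (h : ℂ) + (b : ℂ) * ((((h : ZMod l)⁻¹).val : ℕ) : ℂ)) / (l : ℂ))

/-- `eN n m = exp(2πi m / n)`. -/
noncomputable def eN (n : ℕ) (m : ℤ) : ℂ :=
  Complex.exp (2 * Real.pi * Complex.I * (m : ℂ) / (n : ℂ))

lemma eN_congr {n : ℕ} {m m' : ℤ} (h : m ≡ m' [ZMOD (n : ℤ)]) :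
    eN n m = eN n m' := by
  rcases Nat.eq_zero_or_pos n with hn | hn
  · subst hn
    simp only [Int.ModEq, Int.emod_emod_of_dvd, Nat.cast_zero, Int.emod_zero] at h
    rw [h]
  obtain ⟨k, hk⟩ := h.dvd
  have hm : m = m' + (n : ℤ) * (-k) := by linarith [hk]
  have hnC : (n : ℂ) ≠ 0 := Nat.cast_ne_zero.mpr hn.ne'
  rw [eN, eN, hm]
  have : 2 * Real.pi * Complex.I * (((m' + (n : ℤ) * (-k)) : ℤ) : ℂ) / (n : ℂ)
      = 2 * Real.pi * Complex.I * (m' : ℂ) / (n : ℂ) + (-k : ℤ) * (2 * Real.pi * Complex.I) := by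
    push_cast
    field_simp
  rw [this, Complex.exp_add, Complex.exp_int_mul_two_pi_mul_I, mul_one]

lemma eN_split {l₁ l₂ : ℕ} (h₁ : 0 < l₁) (h₂ : 0 < l₂) (hco : Nat.Coprime l₁ l₂)
    {l₁bar l₂bar : ℤ}
    (hbar₁ : l₁bar * (l₁ : ℤ) ≡ 1 [ZMOD (l₂ : ℤ)])
    (hbar₂ : l₂bar * (l₂ : ℤ) ≡ 1 [ZMOD (l₁ : ℤ)]) (m : ℤ) :
    eN (l₁ * l₂) m = eN l₁ (m * l₂bar) * eN l₂ (m * l₁bar) := by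
  have hz₁ : (l₁bar * l₁ : ℤ) ≡ 0 [ZMOD (l₁ : ℤ)] := (dvd_mul_left (l₁:ℤ) l₁bar).modEq_zero_int
  have hz₂ : (l₂bar * l₂ : ℤ) ≡ 0 [ZMOD (l₂ : ℤ)] := (dvd_mul_left (l₂:ℤ) l₂bar).modEq_zero_int
  have key : (l₂bar * l₂ + l₁bar * l₁ : ℤ) ≡ 1 [ZMOD ((l₁ : ℤ) * (l₂ : ℤ))] := by
    rw [← Int.modEq_and_modEq_iff_modEq_mul (by simpa using hco)]
    constructor
    · simpa using hbar₂.add hz₁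
    · simpa using hz₂.add hbar₁
  have hm : m ≡ m * l₂bar * l₂ + m * l₁bar * l₁ [ZMOD ((l₁ * l₂ : ℕ) : ℤ)] := by
    have := (key.mul_left m).symm
    push_cast
    calc m ≡ m * (l₂bar * l₂ + l₁bar * l₁) [ZMOD ((l₁ : ℤ) * l₂)] := by
          simpa [mul_one] using this
      _ = m * l₂bar * l₂ + m * l₁bar * l₁ := by ring
  rw [eN_congr hm]
  have c₁ : (l₁ : ℂ) ≠ 0 := Nat.cast_ne_zero.mpr h₁.ne'
  have c₂ : (l₂ : ℂ) ≠ 0 := Nat.cast_ne_zero.mpr h₂.ne'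
  rw [eN, eN, eN, ← Complex.exp_add]
  congr 1
  push_cast
  field_simp

/-- Salié sum as a sum over the unit group of `ZMod l`. -/
lemma salie_eq_sum_units (a b : ℤ) (l : ℕ) [NeZero l] :
    salie a b l = ∑ u : (ZMod l)ˣ,
      (jacobiSym (((u : ZMod l).val : ℕ) : ℤ) l : ℂ) *
        eN l (a * (u : ZMod l).val + b * (((u⁻¹ : (ZMod l)ˣ) : ZMod l).val : ℕ)) := by
  rw [salie]
  refine Finset.sum_bij (fun h hmem => ZMod.unitOfCoprime h
      (Finset.mem_filter.mp hmem).2) ?_ ?_ ?_ ?_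
  · intro h hmem; exact Finset.mem_univ _
  · intro h hmem h' hmem' heq
    have := congrArg (fun u : (ZMod l)ˣ => (u : ZMod l)) heq
    simp only [ZMod.coe_unitOfCoprime] at this
    have hl := (Finset.mem_filter.mp hmem).1
    have hl' := (Finset.mem_filter.mp hmem').1
    rw [Finset.mem_range] at hl hl'
    have := congrArg ZMod.val this
    rwa [ZMod.val_cast_of_lt hl, ZMod.val_cast_of_lt hl'] at this
  · intro u _
    refine ⟨(u : ZMod l).val, Finset.mem_filter.mpr
      ⟨Finset.mem_range.mpr (ZMod.val_lt _), ZMod.val_coe_unit_coprime u⟩, ?_⟩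
    apply Units.ext
    simp [ZMod.coe_unitOfCoprime, ZMod.natCast_val, ZMod.cast_id]
  · intro h hmem
    have hl := (Finset.mem_filter.mp hmem).1
    rw [Finset.mem_range] at hl
    have hval : ((ZMod.unitOfCoprime h (Finset.mem_filter.mp hmem).2 : (ZMod l)ˣ) :
        ZMod l).val = h := by
      rw [ZMod.coe_unitOfCoprime, ZMod.val_cast_of_lt hl]
    have hinv : ((h : ZMod l))⁻¹
        = ((ZMod.unitOfCoprime h (Finset.mem_filter.mp hmem).2)⁻¹ : (ZMod l)ˣ) := by
      rw [← ZMod.coe_unitOfCoprime h (Finset.mem_filter.mp hmem).2, ZMod.inv_coe_unit]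
    rw [hval, eN, hinv]
    congr 1
    push_cast
    ring

lemma salie_term_congr (l : ℕ) [NeZero l] {c : ℤ} {v w : ℕ} (h : (v : ℤ) ≡ w [ZMOD (l : ℤ)]) :
    (jacobiSym (v : ℤ) l : ℂ) = (jacobiSym (w : ℤ) l : ℂ) := by
  rw [jacobiSym.mod_left (v : ℤ) l, jacobiSym.mod_left (w : ℤ) l, h]

theorem stmt11 (l₁ l₂ : ℕ) (h₁ : 0 < l₁) (h₂ : 0 < l₂)
    (hodd₁ : Odd l₁) (hodd₂ : Odd l₂) (hco : Nat.Coprime l₁ l₂)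
    (a b l₁bar l₂bar : ℤ)
    (hbar₁ : l₁bar * (l₁ : ℤ) ≡ 1 [ZMOD (l₂ : ℤ)])
    (hbar₂ : l₂bar * (l₂ : ℤ) ≡ 1 [ZMOD (l₁ : ℤ)]) :
    salie a b (l₁ * l₂) =
      salie (a * l₁bar) (b * l₁bar) l₂ * salie (a * l₂bar) (b * l₂bar) l₁ := by
  haveI : NeZero l₁ := ⟨h₁.ne'⟩
  haveI : NeZero l₂ := ⟨h₂.ne'⟩
  haveI : NeZero (l₁ * l₂) := ⟨Nat.mul_ne_zero h₁.ne' h₂.ne'⟩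
  set φ₁ : ZMod (l₁ * l₂) →+* ZMod l₁ := ZMod.castHom (dvd_mul_right l₁ l₂) (ZMod l₁) with hφ₁
  set φ₂ : ZMod (l₁ * l₂) →+* ZMod l₂ := ZMod.castHom (dvd_mul_left l₂ l₁) (ZMod l₂) with hφ₂
  -- the units-level CRT equivalence
  set E : (ZMod (l₁ * l₂))ˣ ≃* (ZMod l₁)ˣ × (ZMod l₂)ˣ :=
    (Units.mapEquiv (ZMod.chineseRemainder hco).toMulEquiv).trans MulEquiv.prodUnits with hE
  have hE1 : ∀ u : (ZMod (l₁ * l₂))ˣ, ((E u).1 : ZMod l₁) = φ₁ (u : ZMod (l₁ * l₂)) := by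
    intro u
    simp [hE, hφ₁, MulEquiv.prodUnits, ZMod.chineseRemainder, ZMod.castHom_apply,
      Prod.fst_zmod_cast]
  have hE2 : ∀ u : (ZMod (l₁ * l₂))ˣ, ((E u).2 : ZMod l₂) = φ₂ (u : ZMod (l₁ * l₂)) := by
    intro u
    simp [hE, hφ₂, MulEquiv.prodUnits, ZMod.chineseRemainder, ZMod.castHom_apply,
      Prod.snd_zmod_cast]
  -- congruences of values
  have hv₁ : ∀ x : ZMod (l₁ * l₂), ((x.val : ℤ)) ≡ ((φ₁ x).val : ℤ) [ZMOD (l₁ : ℤ)] := by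
    intro x
    have : φ₁ x = ((x.val : ℕ) : ZMod l₁) := by
      rw [ZMod.castHom_apply, ← ZMod.natCast_val]
    rw [this, ZMod.val_natCast]
    have h' : ((x.val % l₁ : ℕ) : ℤ) = (x.val : ℤ) % (l₁ : ℤ) := by push_cast; ring
    rw [h']
    show (x.val : ℤ) % (l₁ : ℤ) = (x.val : ℤ) % (l₁ : ℤ) % (l₁ : ℤ)
    exact (Int.emod_emod_of_dvd _ dvd_rfl).symm
  have hv₂ : ∀ x : ZMod (l₁ * l₂), ((x.val : ℤ)) ≡ ((φ₂ x).val : ℤ) [ZMOD (l₂ : ℤ)] := by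
    intro x
    have : φ₂ x = ((x.val : ℕ) : ZMod l₂) := by
      rw [ZMod.castHom_apply, ← ZMod.natCast_val]
    rw [this, ZMod.val_natCast]
    have h' : ((x.val % l₂ : ℕ) : ℤ) = (x.val : ℤ) % (l₂ : ℤ) := by push_cast; ring
    rw [h']
    show (x.val : ℤ) % (l₂ : ℤ) = (x.val : ℤ) % (l₂ : ℤ) % (l₂ : ℤ)
    exact (Int.emod_emod_of_dvd _ dvd_rfl).symm
  rw [salie_eq_sum_units, salie_eq_sum_units, salie_eq_sum_units]
  rw [Finset.sum_mul_sum, ← Fintype.sum_prod_type']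
  refine Fintype.sum_equiv (E.toEquiv.trans (Equiv.prodComm _ _)) _ _ ?_
  intro u
  simp only [Equiv.trans_apply, MulEquiv.coe_toEquiv, Equiv.prodComm_apply, Prod.fst_swap,
    Prod.snd_swap]
  set x : ZMod (l₁ * l₂) := (u : ZMod (l₁ * l₂)) with hx
  set y : ZMod (l₁ * l₂) := ((u⁻¹ : (ZMod (l₁ * l₂))ˣ) : ZMod (l₁ * l₂)) with hy
  have hEinv1 : (((E u).1)⁻¹ : (ZMod l₁)ˣ) = (E u⁻¹).1 := by
    rw [map_inv]; rfl
  have hEinv2 : (((E u).2)⁻¹ : (ZMod l₂)ˣ) = (E u⁻¹).2 := by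
    rw [map_inv]; rfl
  -- Jacobi symbol splitting
  have hjac : (jacobiSym ((x.val : ℕ) : ℤ) (l₁ * l₂) : ℂ)
      = (jacobiSym ((((E u).2 : ZMod l₂).val : ℕ) : ℤ) l₂ : ℂ)
        * (jacobiSym ((((E u).1 : ZMod l₁).val : ℕ) : ℤ) l₁ : ℂ) := by
    rw [jacobiSym.mul_right]
    have j1 : jacobiSym ((x.val : ℕ) : ℤ) l₁ = jacobiSym ((((E u).1 : ZMod l₁).val : ℕ) : ℤ) l₁ := by
      rw [jacobiSym.mod_left ((x.val : ℕ) : ℤ), jacobiSym.mod_left ((((E u).1 : ZMod l₁).val : ℕ) : ℤ)]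
      rw [hE1]
      exact congrArg (fun z => jacobiSym z l₁) (hv₁ x)
    have j2 : jacobiSym ((x.val : ℕ) : ℤ) l₂ = jacobiSym ((((E u).2 : ZMod l₂).val : ℕ) : ℤ) l₂ := by
      rw [jacobiSym.mod_left ((x.val : ℕ) : ℤ), jacobiSym.mod_left ((((E u).2 : ZMod l₂).val : ℕ) : ℤ)]
      rw [hE2]
      exact congrArg (fun z => jacobiSym z l₂) (hv₂ x)
    rw [j1, j2]
    push_cast
    ring
  -- exponential splitting
  have hexp : eN (l₁ * l₂) (a * x.val + b * y.val)
      = eN l₂ ((a * l₁bar) * (((E u).2 : ZMod l₂).val : ℕ)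
            + (b * l₁bar) * ((((E u).2)⁻¹ : (ZMod l₂)ˣ) : ZMod l₂).val)
        * eN l₁ ((a * l₂bar) * (((E u).1 : ZMod l₁).val : ℕ)
            + (b * l₂bar) * ((((E u).1)⁻¹ : (ZMod l₁)ˣ) : ZMod l₁).val) := by
    rw [eN_split h₁ h₂ hco hbar₁ hbar₂]
    rw [mul_comm]
    congr 1
    · -- l₂ factor
      apply eN_congr
      have c1 : ((x.val : ℤ)) ≡ (((E u).2 : ZMod l₂).val : ℤ) [ZMOD (l₂ : ℤ)] := by
        rw [hE2]; exact hv₂ x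
      have c2 : ((y.val : ℤ)) ≡ (((((E u).2)⁻¹ : (ZMod l₂)ˣ) : ZMod l₂).val : ℤ)
          [ZMOD (l₂ : ℤ)] := by
        rw [hEinv2, hE2]; exact hv₂ y
      calc (a * x.val + b * y.val) * l₁bar
          = a * l₁bar * (x.val : ℤ) + b * l₁bar * (y.val : ℤ) := by ring
        _ ≡ a * l₁bar * (((E u).2 : ZMod l₂).val : ℤ)
            + b * l₁bar * (((((E u).2)⁻¹ : (ZMod l₂)ˣ) : ZMod l₂).val : ℤ) [ZMOD (l₂ : ℤ)] :=
          (c1.mul_left _).add (c2.mul_left _)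
    · -- l₁ factor
      apply eN_congr
      have c1 : ((x.val : ℤ)) ≡ (((E u).1 : ZMod l₁).val : ℤ) [ZMOD (l₁ : ℤ)] := by
        rw [hE1]; exact hv₁ x
      have c2 : ((y.val : ℤ)) ≡ (((((E u).1)⁻¹ : (ZMod l₁)ˣ) : ZMod l₁).val : ℤ)
          [ZMOD (l₁ : ℤ)] := by
        rw [hEinv1, hE1]; exact hv₁ y
      calc (a * x.val + b * y.val) * l₂bar
          = a * l₂bar * (x.val : ℤ) + b * l₂bar * (y.val : ℤ) := by ring
        _ ≡ a * l₂bar * (((E u).1 : ZMod l₁).val : ℤ)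
            + b * l₂bar * (((((E u).1)⁻¹ : (ZMod l₁)ˣ) : ZMod l₁).val : ℤ) [ZMOD (l₁ : ℤ)] :=
          (c1.mul_left _).add (c2.mul_left _)
  rw [hjac, hexp]
  simp only [MulEquiv.toEquiv_eq_coe, Equiv.toFun_as_coe, EquivLike.coe_coe, MulEquiv.coe_toEquiv]
  ring
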